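/- A bicomplex matrix A ∈ 𝔹ℂ^{n×n} is hyperbolic positive if and only if there exist m ∈ ℕ and a bicomplex matrix B ∈ 𝔹ℂ^{m×n} such that A = (B*)ᵗ·B. -/

import Mathlib

open Complex Matrix Kronecker BigOperators

open scoped ComplexOrder

/-- Bicomplex numbers, modeled as pairs `(z₁, z₂) ∈ ℂ × ℂ` representing `z₁ + j z₂`.
Addition is the componentwise (Prod) addition. -/
abbrev BC : Type := ℂ × ℂ

noncomputable section

/-- Bicomplex multiplication: `(z₁,z₂)·(w₁,w₂) = (z₁w₁ − z₂w₂, z₁w₂ + z₂w₁)`. -/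
def bcMul (z w : BC) : BC := (z.1 * w.1 - z.2 * w.2, z.1 * w.2 + z.2 * w.1)

/-- The `*`-conjugate `Z* = conj z₁ − j conj z₂`. -/
def bcStar (z : BC) : BC := ((starRingEnd ℂ) z.1, -((starRingEnd ℂ) z.2))

/-- First idempotent component `λ₁ = z₁ − i z₂`. -/
def idem1 (z : BC) : ℂ := z.1 - Complex.I * z.2

/-- Second idempotent component `λ₂ = z₁ + i z₂`. -/
def idem2 (z : BC) : ℂ := z.1 + Complex.I * z.2

/-- Membership in `𝔻⁺`: both idempotent components are nonnegative real numbers. -/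
def inDplus (z : BC) : Prop :=
  (idem1 z).im = 0 ∧ 0 ≤ (idem1 z).re ∧ (idem2 z).im = 0 ∧ 0 ≤ (idem2 z).re

/-- A bicomplex matrix `A = A₁ + j A₂` is a pair of complex matrices. -/
abbrev BCMat (I J : Type) : Type := Matrix I J ℂ × Matrix I J ℂ

/-- Bicomplex matrix multiplication, induced by bicomplex multiplication. -/
def bmul {I J K : Type} [Fintype J] (A : BCMat I J) (B : BCMat J K) : BCMat I K :=
  (A.1 * B.1 - A.2 * B.2, A.1 * B.2 + A.2 * B.1)

/-- `(A*)ᵗ`: the entrywise `*`-conjugate followed by transpose. -/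
def bcStarT {I J : Type} (A : BCMat I J) : BCMat J I := (A.1ᴴ, -(A.2ᴴ))

/-- The `(j,k)` entry of a bicomplex matrix, as a bicomplex number. -/
def bcEntry {I J : Type} (A : BCMat I J) (j : I) (k : J) : BC := (A.1 j k, A.2 j k)

/-- First idempotent component `𝒜₁ = A₁ − i A₂` of a bicomplex matrix. -/
def midem1 {I J : Type} (A : BCMat I J) : Matrix I J ℂ := A.1 - Complex.I • A.2

/-- Second idempotent component `𝒜₂ = A₁ + i A₂` of a bicomplex matrix. -/
def midem2 {I J : Type} (A : BCMat I J) : Matrix I J ℂ := A.1 + Complex.I • A.2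

/-- The bicomplex number `(c*)ᵗ · A · c`. -/
def quadForm {I : Type} [Fintype I] (A : BCMat I I) (c : I → BC) : BC :=
  ∑ j, ∑ k, bcMul (bcStar (c j)) (bcMul (bcEntry A j k) (c k))

/-- `A` is hyperbolic positive if `(c*)ᵗ · A · c ∈ 𝔻⁺` for every bicomplex vector `c`. -/
def HypPos {I : Type} [Fintype I] (A : BCMat I I) : Prop :=
  ∀ c : I → BC, inDplus (quadForm A c)

/-- Bicomplex trace `Tr(A) = Tr(A₁) + j Tr(A₂)`. -/
def bcTrace {I : Type} [Fintype I] (A : BCMat I I) : BC := (A.1.trace, A.2.trace)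

/-- The bicomplex tensor product
`A ⊗ⱼ B = (A₁⊗B₁ − A₂⊗B₂) + j (A₁⊗B₂ + A₂⊗B₁)`. -/
def bkron {I J K L : Type} (A : BCMat I J) (B : BCMat K L) : BCMat (I × K) (J × L) :=
  (A.1 ⊗ₖ B.1 - A.2 ⊗ₖ B.2, A.1 ⊗ₖ B.2 + A.2 ⊗ₖ B.1)

end

/-!
The idempotent components `λ₁, λ₂` turn bicomplex arithmetic into componentwise complex
arithmetic, and turn `*`-conjugation into complex conjugation in each component. Hence
`(c*)ᵗ A c` has idempotent components `u₁ᴴ 𝒜₁ u₁` and `u₂ᴴ 𝒜₂ u₂`, where `u₁, u₂` are the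
idempotent components of `c` and can be chosen independently. So `A` is hyperbolic positive iff
`𝒜₁` and `𝒜₂` are positive semidefinite, i.e. iff `𝒜ₖ = Cₖᴴ Cₖ` for some complex matrices `Cₖ`,
and then `B` with idempotent components `C₁, C₂` satisfies `A = (B*)ᵗ B`.
-/

open scoped ComplexConjugate

theorem Matrix.posSemidef_iff_star_dotProduct_mulVec_nonneg {I : Type} [Fintype I]
    {M : Matrix I I ℂ} : M.PosSemidef ↔ ∀ x : I → ℂ, 0 ≤ star x ⬝ᵥ M *ᵥ x := by
  classical
  refine ⟨fun hM => hM.dotProduct_mulVec_nonneg, fun h => .of_dotProduct_mulVec_nonneg ?_ h⟩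
  -- In `ComplexOrder`, `0 ≤ z` forces `z` to be real, and real quadratic forms are Hermitian.
  rw [← isSymmetric_toEuclideanLin_iff, LinearMap.isSymmetric_iff_inner_map_self_real]
  intro v
  have hreal : conj (star v.ofLp ⬝ᵥ M *ᵥ v.ofLp) = star v.ofLp ⬝ᵥ M *ᵥ v.ofLp :=
    Complex.conj_eq_iff_im.mpr (Complex.nonneg_iff.mp (h v.ofLp)).2.symm
  have hinner : inner ℂ (toEuclideanLin M v) v = conj (star v.ofLp ⬝ᵥ M *ᵥ v.ofLp) := by
    rw [EuclideanSpace.inner_eq_star_dotProduct, dotProduct_star, dotProduct_comm, ofLp_toLpLin]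
    rfl
  rw [hinner, hreal, hreal]

theorem inDplus_iff (z : BC) : inDplus z ↔ 0 ≤ idem1 z ∧ 0 ≤ idem2 z := by
  simp only [inDplus, Complex.nonneg_iff, eq_comm (a := (0 : ℝ))]
  tauto

theorem idem1_bcMul (z w : BC) : idem1 (bcMul z w) = idem1 z * idem1 w := by
  simp only [idem1, bcMul]
  linear_combination (-(z.2 * w.2)) * Complex.I_sq

theorem idem2_bcMul (z w : BC) : idem2 (bcMul z w) = idem2 z * idem2 w := by
  simp only [idem2, bcMul]
  linear_combination (-(z.2 * w.2)) * Complex.I_sq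

theorem idem1_bcStar (z : BC) : idem1 (bcStar z) = conj (idem1 z) := by
  simp only [idem1, bcStar, map_sub, map_mul, Complex.conj_I]
  ring

theorem idem2_bcStar (z : BC) : idem2 (bcStar z) = conj (idem2 z) := by
  simp only [idem2, bcStar, map_add, map_mul, Complex.conj_I]
  ring

theorem idem1_sum {α : Type} (s : Finset α) (f : α → BC) :
    idem1 (∑ a ∈ s, f a) = ∑ a ∈ s, idem1 (f a) := by
  simp [idem1, Prod.fst_sum, Prod.snd_sum, Finset.mul_sum, ← Finset.sum_sub_distrib]

theorem idem2_sum {α : Type} (s : Finset α) (f : α → BC) :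
    idem2 (∑ a ∈ s, f a) = ∑ a ∈ s, idem2 (f a) := by
  simp [idem2, Prod.fst_sum, Prod.snd_sum, Finset.mul_sum, ← Finset.sum_add_distrib]

theorem idem1_bcEntry {I J : Type} (A : BCMat I J) (j : I) (k : J) :
    idem1 (bcEntry A j k) = midem1 A j k := by
  simp [idem1, bcEntry, midem1]

theorem idem2_bcEntry {I J : Type} (A : BCMat I J) (j : I) (k : J) :
    idem2 (bcEntry A j k) = midem2 A j k := by
  simp [idem2, bcEntry, midem2]

theorem idem1_quadForm {I : Type} [Fintype I] (A : BCMat I I) (c : I → BC) :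
    idem1 (quadForm A c) = star (idem1 ∘ c) ⬝ᵥ midem1 A *ᵥ (idem1 ∘ c) := by
  simp only [quadForm, idem1_sum, idem1_bcMul, idem1_bcStar, idem1_bcEntry, dotProduct, mulVec,
    Pi.star_apply, Function.comp_apply, Complex.star_def, Finset.mul_sum]

theorem idem2_quadForm {I : Type} [Fintype I] (A : BCMat I I) (c : I → BC) :
    idem2 (quadForm A c) = star (idem2 ∘ c) ⬝ᵥ midem2 A *ᵥ (idem2 ∘ c) := by
  simp only [quadForm, idem2_sum, idem2_bcMul, idem2_bcStar, idem2_bcEntry, dotProduct, mulVec,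
    Pi.star_apply, Function.comp_apply, Complex.star_def, Finset.mul_sum]

noncomputable def bcOfIdem (u v : ℂ) : BC := ((u + v) / 2, Complex.I * (u - v) / 2)

theorem idem1_bcOfIdem (u v : ℂ) : idem1 (bcOfIdem u v) = u := by
  simp only [idem1, bcOfIdem]
  linear_combination (-(u - v) / 2) * Complex.I_sq

theorem idem2_bcOfIdem (u v : ℂ) : idem2 (bcOfIdem u v) = v := by
  simp only [idem2, bcOfIdem]
  linear_combination ((u - v) / 2) * Complex.I_sq

theorem midem1_bmul {I J K : Type} [Fintype J] (X : BCMat I J) (Y : BCMat J K) :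
    midem1 (bmul X Y) = midem1 X * midem1 Y := by
  simp only [midem1, bmul, Matrix.sub_mul, Matrix.mul_sub, Matrix.smul_mul, Matrix.mul_smul,
    smul_smul, Complex.I_mul_I, neg_one_smul, smul_add, smul_sub]
  abel

theorem midem2_bmul {I J K : Type} [Fintype J] (X : BCMat I J) (Y : BCMat J K) :
    midem2 (bmul X Y) = midem2 X * midem2 Y := by
  simp only [midem2, bmul, Matrix.add_mul, Matrix.mul_add, Matrix.smul_mul, Matrix.mul_smul,
    smul_smul, Complex.I_mul_I, neg_one_smul, smul_add]
  abel

theorem midem1_bcStarT {I J : Type} (B : BCMat I J) : midem1 (bcStarT B) = (midem1 B)ᴴ := by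
  simp only [midem1, bcStarT, conjTranspose_sub, conjTranspose_smul, Complex.star_def,
    Complex.conj_I, neg_smul, sub_neg_eq_add, smul_neg]

theorem midem2_bcStarT {I J : Type} (B : BCMat I J) : midem2 (bcStarT B) = (midem2 B)ᴴ := by
  simp only [midem2, bcStarT, conjTranspose_add, conjTranspose_smul, Complex.star_def,
    Complex.conj_I, neg_smul, smul_neg]

noncomputable def bcMatOfIdem {I J : Type} (P Q : Matrix I J ℂ) : BCMat I J :=
  ((1 / 2 : ℂ) • (P + Q), (Complex.I / 2) • (P - Q))

theorem midem1_bcMatOfIdem {I J : Type} (P Q : Matrix I J ℂ) : midem1 (bcMatOfIdem P Q) = P := by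
  ext i j
  simp only [midem1, bcMatOfIdem, Matrix.sub_apply, Matrix.smul_apply, Matrix.add_apply, smul_eq_mul]
  linear_combination (-(P i j - Q i j) / 2) * Complex.I_sq

theorem midem2_bcMatOfIdem {I J : Type} (P Q : Matrix I J ℂ) : midem2 (bcMatOfIdem P Q) = Q := by
  ext i j
  simp only [midem2, bcMatOfIdem, Matrix.add_apply, Matrix.smul_apply, Matrix.sub_apply, smul_eq_mul]
  linear_combination ((P i j - Q i j) / 2) * Complex.I_sq

theorem bcMatOfIdem_midem {I J : Type} (X : BCMat I J) :
    bcMatOfIdem (midem1 X) (midem2 X) = X := by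
  refine Prod.ext ?_ ?_ <;> ext i j
  · simp only [bcMatOfIdem, midem1, midem2, Matrix.add_apply, Matrix.sub_apply, Matrix.smul_apply, smul_eq_mul]
    ring
  · simp only [bcMatOfIdem, midem1, midem2, Matrix.add_apply, Matrix.sub_apply, Matrix.smul_apply, smul_eq_mul]
    linear_combination (-X.2 i j) * Complex.I_sq

theorem hypPos_iff_posSemidef {I : Type} [Fintype I] (A : BCMat I I) :
    HypPos A ↔ (midem1 A).PosSemidef ∧ (midem2 A).PosSemidef := by
  simp only [HypPos, inDplus_iff, idem1_quadForm, idem2_quadForm,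
    posSemidef_iff_star_dotProduct_mulVec_nonneg]
  refine ⟨fun h => ⟨fun u => ?_, fun v => ?_⟩, fun h c => ⟨h.1 _, h.2 _⟩⟩
  · simpa only [Function.comp_def, idem1_bcOfIdem] using (h fun j => bcOfIdem (u j) 0).1
  · simpa only [Function.comp_def, idem2_bcOfIdem] using (h fun j => bcOfIdem 0 (v j)).2

theorem posSemidef_midem_bmul_bcStarT_self {I J : Type} [Fintype I] [Fintype J] (B : BCMat I J) :
    (midem1 (bmul (bcStarT B) B)).PosSemidef ∧ (midem2 (bmul (bcStarT B) B)).PosSemidef := by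
  rw [midem1_bmul, midem2_bmul, midem1_bcStarT, midem2_bcStarT]
  exact ⟨posSemidef_conjTranspose_mul_self _, posSemidef_conjTranspose_mul_self _⟩

open scoped MatrixOrder in
theorem exists_eq_bmul_bcStarT_self {I : Type} [Fintype I] [DecidableEq I] {A : BCMat I I}
    (h₁ : (midem1 A).PosSemidef) (h₂ : (midem2 A).PosSemidef) :
    ∃ B : BCMat I I, A = bmul (bcStarT B) B := by
  obtain ⟨C₁, hC₁⟩ := CStarAlgebra.nonneg_iff_eq_star_mul_self.mp h₁.nonneg
  obtain ⟨C₂, hC₂⟩ := CStarAlgebra.nonneg_iff_eq_star_mul_self.mp h₂.nonneg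
  refine ⟨bcMatOfIdem C₁ C₂, ?_⟩
  rw [← bcMatOfIdem_midem A, ← bcMatOfIdem_midem (bmul _ _), midem1_bmul, midem2_bmul,
    midem1_bcStarT, midem2_bcStarT, midem1_bcMatOfIdem, midem2_bcMatOfIdem, hC₁, hC₂]
  rfl

/-- `A` is hyperbolic positive iff `A = (B*)ᵗ · B` for some
bicomplex matrix `B ∈ 𝔹ℂ^{m×n}`. -/
theorem hypPos_iff_starT_mul {n : ℕ} (A : BCMat (Fin n) (Fin n)) :
    HypPos A ↔ ∃ (m : ℕ) (B : BCMat (Fin m) (Fin n)), A = bmul (bcStarT B) B := by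
  rw [hypPos_iff_posSemidef]
  constructor
  · rintro ⟨h₁, h₂⟩
    exact ⟨n, exists_eq_bmul_bcStarT_self h₁ h₂⟩
  · rintro ⟨m, B, rfl⟩
    exact posSemidef_midem_bmul_bcStarT_self B
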